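/- ζ(4) = Σ_{n=1}^∞ (ψ''(n+1) + 2ζ(3)) / (2n(n+1)) = π⁴/90, where ψ'' is the second derivative of the digamma function. -/

import Mathlib

open scoped BigOperators

/-- The second polygamma function `ψ''(x) = -2 Σ_{k=0}^∞ 1/(k+x)³`. -/
noncomputable def polygamma2 (x : ℝ) : ℝ := -2 * ∑' k : ℕ, 1 / ((k : ℝ) + x) ^ 3

open Filter Finset

/-! With `a i = 1/(i+1)³`, the numerator `ψ''(n+2) + 2ζ(3)` equals twice the partial sum
`a 0 + ⋯ + a n`, so the series is `Σₙ (a 0 + ⋯ + a n) / ((n+1)(n+2))`. Since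
`1/((n+1)(n+2)) = 1/(n+1) - 1/(n+2)`, summation by parts turns it into `Σᵢ a i / (i+1) = ζ(4)`,
the boundary term `(a 0 + ⋯ + a N)/(N+1)` vanishing in the limit because `Σ a` converges. -/

lemma summable_one_div_nat_add_one_pow {p : ℕ} (hp : 1 < p) :
    Summable (fun n : ℕ => 1 / ((n : ℝ) + 1) ^ p) := by
  simpa using (summable_nat_add_iff 1).mpr (Real.summable_one_div_nat_pow.mpr hp)

lemma hasSum_one_div_nat_add_one_pow_four :
    HasSum (fun n : ℕ => 1 / ((n : ℝ) + 1) ^ 4) (Real.pi ^ 4 / 90) := by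
  simpa using (hasSum_nat_add_iff' 1).mpr hasSum_zeta_four

lemma polygamma2_nat_add_one (n : ℕ) :
    polygamma2 (n + 1) =
      2 * ∑ i ∈ range n, 1 / ((i : ℝ) + 1) ^ 3 - 2 * ∑' m : ℕ, 1 / ((m : ℝ) + 1) ^ 3 := by
  rw [polygamma2,
    ← (summable_one_div_nat_add_one_pow (p := 3) (by norm_num)).sum_add_tsum_nat_add n]
  push_cast
  simp only [add_assoc]
  ring

lemma tendsto_sum_range_succ_div_atTop_zero {a : ℕ → ℝ} (ha : Summable a) :
    Tendsto (fun n : ℕ => (∑ i ∈ range (n + 1), a i) / ((n : ℝ) + 1)) atTop (nhds 0) :=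
  ((ha.hasSum.tendsto_sum_nat).comp (tendsto_add_atTop_nat 1)).div_atTop
    (tendsto_atTop_add_const_right _ _ tendsto_natCast_atTop_atTop)

lemma sum_range_sum_div_mul_succ (a : ℕ → ℝ) (N : ℕ) :
    ∑ n ∈ range N, (∑ i ∈ range (n + 1), a i) / (((n : ℝ) + 1) * ((n : ℝ) + 2)) =
      ∑ i ∈ range (N + 1), a i / ((i : ℝ) + 1) -
        (∑ i ∈ range (N + 1), a i) / ((N : ℝ) + 1) := by
  induction N with
  | zero => simp
  | succ N ih =>
    rw [sum_range_succ, ih, sum_range_succ _ (N + 1), sum_range_succ _ (N + 1)]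
    push_cast
    field_simp
    ring

theorem hasSum_sum_range_div_mul_succ {a : ℕ → ℝ} {s : ℝ} (ha : ∀ i, 0 ≤ a i)
    (ha_sum : Summable a) (hs : HasSum (fun i : ℕ => a i / ((i : ℝ) + 1)) s) :
    HasSum (fun n : ℕ => (∑ i ∈ range (n + 1), a i) / (((n : ℝ) + 1) * ((n : ℝ) + 2))) s := by
  rw [hasSum_iff_tendsto_nat_of_nonneg fun n =>
    div_nonneg (sum_nonneg fun i _ => ha i) (by positivity)]
  simp only [sum_range_sum_div_mul_succ]
  simpa using (hs.tendsto_sum_nat.comp (tendsto_add_atTop_nat 1)).sub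
    (tendsto_sum_range_succ_div_atTop_zero ha_sum)

/-- `ζ(4) = Σ_{n=1}^∞ (ψ''(n+1) + 2ζ(3))/(2n(n+1)) = π⁴/90`. -/
theorem zeta_four_eq_polygamma_sum :
    (∑' n : ℕ, 1 / ((n : ℝ) + 1) ^ 4) =
      (∑' n : ℕ, (polygamma2 ((n : ℝ) + 2) + 2 * ∑' m : ℕ, 1 / ((m : ℝ) + 1) ^ 3) /
        (2 * ((n : ℝ) + 1) * ((n : ℝ) + 2))) ∧
    (∑' n : ℕ, 1 / ((n : ℝ) + 1) ^ 4) = Real.pi ^ 4 / 90 := by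
  have hζ4 := hasSum_one_div_nat_add_one_pow_four
  have hterm (n : ℕ) :
      (polygamma2 ((n : ℝ) + 2) + 2 * ∑' m : ℕ, 1 / ((m : ℝ) + 1) ^ 3) /
          (2 * ((n : ℝ) + 1) * ((n : ℝ) + 2)) =
        (∑ i ∈ range (n + 1), 1 / ((i : ℝ) + 1) ^ 3) / (((n : ℝ) + 1) * ((n : ℝ) + 2)) := by
    have hψ := polygamma2_nat_add_one (n + 1)
    push_cast at hψ
    rw [show (n : ℝ) + 1 + 1 = n + 2 by ring] at hψ
    rw [hψ]
    field_simp
    ring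
  have hsum := hasSum_sum_range_div_mul_succ (fun i => by positivity)
    (summable_one_div_nat_add_one_pow (by norm_num : 1 < 3))
    (hζ4.congr_fun fun i => by field_simp)
  rw [tsum_congr hterm, hsum.tsum_eq, hζ4.tsum_eq]
  exact ⟨rfl, rfl⟩
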